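/- Let X_1 = X_2 = X_3 = {0,1}. (i) The staging ~ over the variable order (X_1, X_2, X_3) in which the two depth-1 vertices are in different stages and all four depth-2 vertices form a single stage is simple, and its staged tree model M(~) equals the set of strictly positive P on {0,1}³ with X_3 independent of (X_1, X_2). (ii) The staging ~' over the variable order (X_1, X_3, X_2) in which the two depth-1 vertices form a single stage and the four depth-2 vertices (x_1, x_3) are staged according to the value of x_1 is not simple, yet the set of strictly positive joint pmfs of (X_1, X_2, X_3) induced by its staged tree model equals M(~). Hence the equivalence class of a simple staged tree can contain non-simple staged trees (Remark 1). -/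

import Mathlib

/-!
Encoding: joint probability mass functions of three binary variables are
real-valued functions on `Fin 3 → Bool`.  For a given variable order, a
depth-(i-1) vertex (context) is represented by a full assignment (in that order)
of which only the coordinates `k < i` are relevant.
-/

/-- `v` and `w` agree on all coordinates below `i`. -/
def agreeBelow (i : Fin 3) (v w : Fin 3 → Bool) : Prop :=
  ∀ k : Fin 3, k < i → v k = w k

/-- Two depth-(i-1) vertices are in the same position: `(v,z) ~_j (w,z)` for every
`j ∈ {i,…,p}` and every suffix `z`. -/
def samePos (rel : Fin 3 → (Fin 3 → Bool) → (Fin 3 → Bool) → Prop)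
    (i : Fin 3) (v w : Fin 3 → Bool) : Prop :=
  ∀ j : Fin 3, i ≤ j → ∀ v' w' : Fin 3 → Bool,
    agreeBelow i v' v → agreeBelow i w' w →
    (∀ k : Fin 3, i ≤ k → k < j → v' k = w' k) → rel j v' w'

/-- The staged tree model `M(~)` of a staging given by the stage relations `rel`:
strictly positive pmfs factorizing with conditional pmfs `y` constant on stages. -/
def memModel (rel : Fin 3 → (Fin 3 → Bool) → (Fin 3 → Bool) → Prop)
    (P : (Fin 3 → Bool) → ℝ) : Prop :=
  (∀ x, 0 < P x) ∧ (∑ x, P x = 1) ∧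
    ∃ y : Fin 3 → (Fin 3 → Bool) → Bool → ℝ,
      (∀ i v x, 0 < y i v x) ∧
      (∀ i v, ∑ x, y i v x = 1) ∧
      (∀ i v w, rel i v w → y i v = y i w) ∧
      (∀ x, P x = ∏ i, y i x (x i))

/-- The staging `~` over the order `(X_1, X_2, X_3)`: the two depth-1 vertices are
in different stages (`v ~_2 w` iff `v` and `w` share the value of `X_1`) and all
four depth-2 vertices form a single stage. -/
def relA : Fin 3 → (Fin 3 → Bool) → (Fin 3 → Bool) → Prop :=
  fun i v w => i = 1 → v 0 = w 0

/-- The staging `~'` over the order `(X_1, X_3, X_2)` (coordinates of full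
assignments `u` are `(x_1, x_3, x_2)`): the two depth-1 vertices form a single
stage, and the four depth-2 vertices `(x_1, x_3)` are staged according to the
value of `x_1`. -/
def relB : Fin 3 → (Fin 3 → Bool) → (Fin 3 → Bool) → Prop :=
  fun i v w => i = 2 → v 0 = w 0

/-!
Both models consist of the positive pmfs `P(x) = α(x₁) β_{x₁}(x₂) γ(x₃)`: in `~` the
factor `γ` is shared by all four depth-2 vertices, and in `~'` the factor `γ` sits at
depth 1 and `β_{x₁}` at depth 2.  Reordering coordinates by the transposition `(1 2)` maps
stages of `~'` into stages of `~` and back, so the conditional pmfs can be transported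
between the two trees.  For `~` such a factorization is exactly independence of `X₃`
from `(X₁, X₂)`, the factors being the marginals.  The staging `~'` is not simple since
its two depth-1 vertices share a stage while their children lie in different stages.
-/

def IsSimple (rel : Fin 3 → (Fin 3 → Bool) → (Fin 3 → Bool) → Prop) : Prop :=
  ∀ i v w, rel i v w → samePos rel i v w

theorem relA_isSimple : IsSimple relA := by
  intro i v w hvw j hij v' w' hv hw hmid (rfl : j = 1)
  rcases hij.lt_or_eq with hlt | rfl
  · exact hmid 0 (by omega) (by decide)
  · rw [hv 0 (by decide), hw 0 (by decide)]
    exact hvw rfl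

theorem relB_not_isSimple : ¬ IsSimple relB := by
  intro h
  have := h 1 ![true, false, false] ![false, false, false] (by simp [relB]) 2 (by decide)
    _ _ (fun _ _ => rfl) (fun _ _ => rfl) (by decide) rfl
  simp at this

theorem sum_fun_fin_three {α M : Type*} [Fintype α] [AddCommMonoid M] (f : (Fin 3 → α) → M) :
    ∑ x, f x = ∑ a, ∑ b, ∑ c, f ![a, b, c] := by
  simp only [← (Fin.consEquiv fun _ => α).sum_comp, Fintype.sum_prod_type, Fintype.sum_unique]
  rfl

section Reorder

variable {rel rel' : Fin 3 → (Fin 3 → Bool) → (Fin 3 → Bool) → Prop}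

theorem memModel.comp_perm (π : Equiv.Perm (Fin 3))
    (hrel : ∀ i v w, rel' i v w → rel (π.symm i) (v ∘ π) (w ∘ π))
    {P : (Fin 3 → Bool) → ℝ} (hP : memModel rel P) :
    memModel rel' (fun u => P (u ∘ π)) := by
  obtain ⟨hpos, hsum, y, hy_pos, hy_sum, hy_stage, hy_prod⟩ := hP
  refine ⟨fun u => hpos _, ?_, fun i v => y (π.symm i) (v ∘ π), fun i v => hy_pos _ _,
    fun i v => hy_sum _ _, fun i v w h => hy_stage _ _ _ (hrel i v w h), fun u => ?_⟩
  · exact ((π.symm.arrowCongr (Equiv.refl Bool)).sum_comp P).trans hsum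
  · show P (u ∘ π) = ∏ i, y (π.symm i) (u ∘ π) (u i)
    rw [hy_prod, ← π.symm.prod_comp]
    simp

theorem memModel_comp_perm_iff (π : Equiv.Perm (Fin 3))
    (hrel : ∀ i v w, rel' i v w → rel (π.symm i) (v ∘ π) (w ∘ π))
    (hrel' : ∀ i v w, rel i v w → rel' (π i) (v ∘ π.symm) (w ∘ π.symm))
    (P : (Fin 3 → Bool) → ℝ) :
    memModel rel' (fun u => P (u ∘ π)) ↔ memModel rel P := by
  refine ⟨fun h => ?_, memModel.comp_perm π hrel⟩
  simpa [Function.comp_assoc] using h.comp_perm π.symm (by simpa using hrel')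

end Reorder

theorem relB_comp_swap_imp_relA (i : Fin 3) (v w : Fin 3 → Bool) (h : relB i v w) :
    relA ((Equiv.swap 1 2).symm i) (v ∘ Equiv.swap 1 2) (w ∘ Equiv.swap 1 2) := by
  fin_cases i <;> simp_all [relA, relB, Equiv.swap_apply_of_ne_of_ne]

theorem relA_comp_swap_imp_relB (i : Fin 3) (v w : Fin 3 → Bool) (h : relA i v w) :
    relB (Equiv.swap 1 2 i) (v ∘ (Equiv.swap 1 2).symm) (w ∘ (Equiv.swap 1 2).symm) := by
  fin_cases i <;> simp_all [relA, relB, Equiv.swap_apply_of_ne_of_ne]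

theorem memModel_relB_reorder_iff (P : (Fin 3 → Bool) → ℝ) :
    memModel relB (fun u => P ![u 0, u 2, u 1]) ↔ memModel relA P := by
  have hswap : ∀ u : Fin 3 → Bool, ![u 0, u 2, u 1] = u ∘ Equiv.swap 1 2 := fun u => by
    funext i; fin_cases i <;> rfl
  simp only [hswap]
  exact memModel_comp_perm_iff _ relB_comp_swap_imp_relA relA_comp_swap_imp_relB P

section Marginals

variable {P : (Fin 3 → Bool) → ℝ}

def marg12 (P : (Fin 3 → Bool) → ℝ) (a b : Bool) : ℝ := ∑ c, P ![a, b, c]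

def marg3 (P : (Fin 3 → Bool) → ℝ) (c : Bool) : ℝ := ∑ a, ∑ b, P ![a, b, c]

def marg1 (P : (Fin 3 → Bool) → ℝ) (a : Bool) : ℝ := ∑ b, marg12 P a b

theorem marg12_pos (hpos : ∀ x, 0 < P x) (a b : Bool) : 0 < marg12 P a b :=
  Finset.sum_pos (fun _ _ => hpos _) Finset.univ_nonempty

theorem marg1_pos (hpos : ∀ x, 0 < P x) (a : Bool) : 0 < marg1 P a :=
  Finset.sum_pos (fun _ _ => marg12_pos hpos a _) Finset.univ_nonempty

theorem marg3_pos (hpos : ∀ x, 0 < P x) (c : Bool) : 0 < marg3 P c :=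
  Finset.sum_pos (fun _ _ => Finset.sum_pos (fun _ _ => hpos _) Finset.univ_nonempty)
    Finset.univ_nonempty

theorem sum_marg1 : ∑ a, marg1 P a = ∑ x, P x :=
  (sum_fun_fin_three P).symm

theorem sum_marg3 : ∑ c, marg3 P c = ∑ x, P x := by
  simp only [marg3]
  rw [sum_fun_fin_three P, Finset.sum_comm]
  exact Finset.sum_congr rfl fun a _ => Finset.sum_comm

theorem marg12_mul_marg3_of_eq_mul {f : Bool → Bool → ℝ} {g : Bool → ℝ}
    (hP : ∀ a b c, P ![a, b, c] = f a b * g c)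
    (hf : ∑ a, ∑ b, f a b = 1) (hg : ∑ c, g c = 1) (x : Fin 3 → Bool) :
    P x = marg12 P (x 0) (x 1) * marg3 P (x 2) := by
  have h12 : marg12 P (x 0) (x 1) = f (x 0) (x 1) := by
    simp only [marg12, hP, ← Finset.mul_sum, hg, mul_one]
  have h3 : marg3 P (x 2) = g (x 2) := by
    simp only [marg3, hP, ← Finset.sum_mul, hf, one_mul]
  have hx : x = ![x 0, x 1, x 2] := by
    funext i; fin_cases i <;> rfl
  rw [h12, h3, hx, hP]
  rfl

end Marginals

theorem memModel_relA_imp_indep {P : (Fin 3 → Bool) → ℝ} (h : memModel relA P)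
    (x : Fin 3 → Bool) : P x = marg12 P (x 0) (x 1) * marg3 P (x 2) := by
  obtain ⟨-, -, y, -, hy_sum, hy_stage, hy_prod⟩ := h
  let d : Fin 3 → Bool := fun _ => false
  have hy0 : ∀ v, y 0 v = y 0 d := fun v => hy_stage 0 v d fun h => absurd h (by decide)
  have hy2 : ∀ v, y 2 v = y 2 d := fun v => hy_stage 2 v d fun h => absurd h (by decide)
  have hy1 : ∀ a b c, y 1 ![a, b, c] = y 1 (fun _ => a) := fun _ _ _ =>
    hy_stage 1 _ _ fun _ => rfl
  refine marg12_mul_marg3_of_eq_mul (f := fun a b => y 0 d a * y 1 (fun _ => a) b) (g := y 2 d)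
    (fun a b c => ?_) ?_ (hy_sum 2 d) x
  · rw [hy_prod, Fin.prod_univ_three, hy0, hy1, hy2]
    rfl
  · simp only [← Finset.mul_sum, hy_sum, mul_one]

theorem memModel_relA_of_indep {P : (Fin 3 → Bool) → ℝ} (hpos : ∀ x, 0 < P x)
    (hsum : ∑ x, P x = 1) (hind : ∀ x, P x = marg12 P (x 0) (x 1) * marg3 P (x 2)) :
    memModel relA P := by
  refine ⟨hpos, hsum,
    ![fun _ => marg1 P, fun v b => marg12 P (v 0) b / marg1 P (v 0), fun _ => marg3 P],
    fun i v x => ?_, fun i v => ?_, fun i v w h => ?_, fun x => ?_⟩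
  · fin_cases i
    · exact marg1_pos hpos x
    · exact div_pos (marg12_pos hpos _ _) (marg1_pos hpos _)
    · exact marg3_pos hpos x
  · fin_cases i
    · exact sum_marg1.trans hsum
    · exact (Finset.sum_div ..).symm.trans (div_self (marg1_pos hpos _).ne')
    · exact sum_marg3.trans hsum
  · fin_cases i
    · rfl
    · simp [h rfl]
    · rfl
  · have := (marg1_pos hpos (x 0)).ne'
    rw [Fin.prod_univ_three, hind x]
    show _ = marg1 P (x 0) * (marg12 P (x 0) (x 1) / marg1 P (x 0)) * marg3 P (x 2)
    field_simp

theorem memModel_relA_iff (P : (Fin 3 → Bool) → ℝ) :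
    memModel relA P ↔
      (∀ x, 0 < P x) ∧ ∑ x, P x = 1 ∧ ∀ x, P x = marg12 P (x 0) (x 1) * marg3 P (x 2) :=
  ⟨fun h => ⟨h.1, h.2.1, memModel_relA_imp_indep h⟩,
    fun ⟨hpos, hsum, hind⟩ => memModel_relA_of_indep hpos hsum hind⟩

/--
**Remark 1.**
(i) The staging `~` (`relA`) over the order `(X_1, X_2, X_3)` is simple and its
staged tree model `M(~)` equals the set of strictly positive `P` on `{0,1}³` with
`X_3` independent of `(X_1, X_2)`.
(ii) The staging `~'` (`relB`) over the order `(X_1, X_3, X_2)` is not simple, yet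
the set of strictly positive joint pmfs of `(X_1, X_2, X_3)` induced by its staged
tree model (via the reordering `Q (x_1, x_3, x_2) = P (x_1, x_2, x_3)`) equals
`M(~)`.  Hence the equivalence class of a simple staged tree can contain non-simple
staged trees.
-/
theorem equivalence_class_contains_nonsimple :
    (∀ (i : Fin 3) (v w : Fin 3 → Bool), relA i v w → samePos relA i v w) ∧
      (∀ P : (Fin 3 → Bool) → ℝ,
        memModel relA P ↔
          ((∀ x, 0 < P x) ∧ (∑ x, P x = 1) ∧
            ∀ v : Fin 3 → Bool,
              P v = (∑ c : Bool, P ![v 0, v 1, c]) *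
                (∑ a : Bool, ∑ b : Bool, P ![a, b, v 2]))) ∧
      ¬ (∀ (i : Fin 3) (v w : Fin 3 → Bool), relB i v w → samePos relB i v w) ∧
      (∀ P : (Fin 3 → Bool) → ℝ,
        memModel relB (fun u => P ![u 0, u 2, u 1]) ↔ memModel relA P) :=
  ⟨relA_isSimple, memModel_relA_iff, relB_not_isSimple, memModel_relB_reorder_iff⟩
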